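/- arXiv:2405.07619 — 3 statements merged into one kernel-verified Lean document; each statement's English description precedes it below -/
import Mathlib

section
/- Let F : ℝ^K → ℝ≥0 be a nonnegative differentiable function, t ∈ ℕ, L > 0, λ = 1/L, a₀ ∈ ℝ^K, and define a_{k+1} = a_k − λ ∇F(a_k) for k = 0,…,t−1. Assume that ‖∇F(a) − ∇F(b)‖ ≤ L‖a−b‖ holds for all a,b with ‖a − a₀‖ ≤ √(8 t max{F(a₀),1}/L) and ‖b − a₀‖ ≤ √(8 t max{F(a₀),1}/L), and that ‖∇F(a)‖ ≤ √(2 t L max{F(a₀),1}) for all a with ‖a − a₀‖ ≤ √(2 t max{F(a₀),1}/L). Then for all k ∈ {1,…,t}: F(a_k) ≤ F(a_{k−1}) − (1/(2L)) ‖∇F(a_{k−1})‖². -/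
open Real

lemma gd_deriv {E : Type*} [NormedAddCommGroup E] [InnerProductSpace ℝ E] [CompleteSpace E]
    (F : E → ℝ) (hF : Differentiable ℝ F) (x d : E) (s : ℝ) :
    HasDerivAt (fun s : ℝ => F (x + s • d)) (inner ℝ (gradient F (x + s • d)) d : ℝ) s := by
  have h2 := hasGradientAt_iff_hasFDerivAt.mp (hF (x + s • d)).hasGradientAt
  have h3 : HasDerivAt (fun s : ℝ => x + s • d) d s := by
    simpa using (hasDerivAt_id s).smul_const d |>.const_add x
  simpa [Function.comp_def] using h2.comp_hasDerivAt s h3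

lemma gd_descent {E : Type*} [NormedAddCommGroup E] [InnerProductSpace ℝ E] [CompleteSpace E]
    (F : E → ℝ) (hF : Differentiable ℝ F) (x d : E) (L : ℝ) (hL : 0 < L)
    (hl : ∀ s ∈ Set.Icc (0:ℝ) 1, ∀ s' ∈ Set.Icc (0:ℝ) 1,
      ‖gradient F (x + s • d) - gradient F (x + s' • d)‖ ≤ L * (|s - s'| * ‖d‖)) :
    F (x + d) ≤ F x + inner ℝ (gradient F x) d + L / 2 * ‖d‖ ^ 2 := by
  set φ : ℝ → ℝ := fun s => (inner ℝ (gradient F (x + s • d)) d : ℝ) with hφ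
  have hderiv : ∀ s ∈ Set.uIcc (0:ℝ) 1, HasDerivAt (fun s : ℝ => F (x + s • d)) (φ s) s :=
    fun s _ => gd_deriv F hF x d s
  have hcont : ContinuousOn φ (Set.uIcc (0:ℝ) 1) := by
    rw [Set.uIcc_of_le (by norm_num : (0:ℝ) ≤ 1)]
    apply LipschitzOnWith.continuousOn (K := Real.toNNReal (L * ‖d‖ * ‖d‖))
    rw [lipschitzOnWith_iff_dist_le_mul]
    intro s hs s' hs'
    have h1 : |φ s - φ s'| ≤ L * (|s - s'| * ‖d‖) * ‖d‖ := by
      have := hl s hs s' hs'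
      calc |φ s - φ s'| = |(inner ℝ (gradient F (x + s • d) - gradient F (x + s' • d)) d : ℝ)| := by
            rw [inner_sub_left]
        _ ≤ ‖gradient F (x + s • d) - gradient F (x + s' • d)‖ * ‖d‖ := by
            exact (abs_real_inner_le_norm _ _)
        _ ≤ L * (|s - s'| * ‖d‖) * ‖d‖ := by
            apply mul_le_mul_of_nonneg_right this (norm_nonneg _)
    rw [Real.dist_eq, Real.dist_eq]
    have hnn : 0 ≤ L * ‖d‖ * ‖d‖ := by positivity
    rw [Real.coe_toNNReal _ hnn]
    calc |φ s - φ s'| ≤ L * (|s - s'| * ‖d‖) * ‖d‖ := h1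
      _ = L * ‖d‖ * ‖d‖ * |s - s'| := by ring
  have hint : IntervalIntegrable φ MeasureTheory.volume 0 1 :=
    hcont.intervalIntegrable
  have heq : F (x + d) - F x = ∫ s in (0:ℝ)..1, φ s := by
    have := intervalIntegral.integral_eq_sub_of_hasDerivAt hderiv hint
    rw [this]; simp
  have hmono : ∫ s in (0:ℝ)..1, φ s ≤ ∫ s in (0:ℝ)..1, (φ 0 + L * s * ‖d‖ ^ 2) := by
    apply intervalIntegral.integral_mono_on (by norm_num) hint
    · apply IntervalIntegrable.add intervalIntegrable_const
      apply Continuous.intervalIntegrable; continuity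
    · intro s hs
      have h0 : (0:ℝ) ∈ Set.Icc (0:ℝ) 1 := by norm_num
      have := hl s hs 0 h0
      have hcs : φ s - φ 0 ≤ ‖gradient F (x + s • d) - gradient F (x + (0:ℝ) • d)‖ * ‖d‖ := by
        rw [hφ]
        calc (inner ℝ (gradient F (x + s • d)) d : ℝ) - inner ℝ (gradient F (x + (0:ℝ) • d)) d
            = inner ℝ (gradient F (x + s • d) - gradient F (x + (0:ℝ) • d)) d := by
              rw [inner_sub_left]
          _ ≤ ‖gradient F (x + s • d) - gradient F (x + (0:ℝ) • d)‖ * ‖d‖ :=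
              real_inner_le_norm _ _
      have hs0 : |s - 0| = s := by rw [sub_zero, abs_of_nonneg hs.1]
      have : φ s - φ 0 ≤ L * (s * ‖d‖) * ‖d‖ := by
        calc φ s - φ 0 ≤ _ := hcs
          _ ≤ L * (|s - 0| * ‖d‖) * ‖d‖ := mul_le_mul_of_nonneg_right this (norm_nonneg _)
          _ = L * (s * ‖d‖) * ‖d‖ := by rw [hs0]
      nlinarith [this]
  have hval : ∫ s in (0:ℝ)..1, (φ 0 + L * s * ‖d‖ ^ 2) = φ 0 + L / 2 * ‖d‖ ^ 2 := by
    rw [intervalIntegral.integral_add intervalIntegrable_const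
      (by apply Continuous.intervalIntegrable; continuity)]
    have h2 : ∫ s in (0:ℝ)..1, L * s * ‖d‖ ^ 2 = L / 2 * ‖d‖ ^ 2 := by
      rw [show (fun s : ℝ => L * s * ‖d‖ ^ 2) = fun s : ℝ => (L * ‖d‖ ^ 2) * s by ext s; ring,
        intervalIntegral.integral_const_mul, integral_id]
      ring
    rw [h2]
    simp
  have hφ0 : φ 0 = inner ℝ (gradient F x) d := by simp [hφ]
  have := heq ▸ hmono
  rw [hval, hφ0] at hmono
  linarith [heq ▸ hmono, heq]

/-- Gradient descent descent lemma (Lemma 2, third conclusion). -/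
theorem gradient_descent_sufficient_decrease
    {K : ℕ} (F : EuclideanSpace ℝ (Fin K) → ℝ)
    (hFnonneg : ∀ x, 0 ≤ F x) (hFdiff : Differentiable ℝ F)
    (t : ℕ) (L : ℝ) (hL : 0 < L)
    (a : ℕ → EuclideanSpace ℝ (Fin K))
    (hstep : ∀ k < t, a (k + 1) = a k - (1 / L) • gradient F (a k))
    (hgrad : ∀ x, ‖x - a 0‖ ≤ Real.sqrt (2 * t * max (F (a 0)) 1 / L) →
      ‖gradient F x‖ ≤ Real.sqrt (2 * t * L * max (F (a 0)) 1))
    (hlip : ∀ x y, ‖x - a 0‖ ≤ Real.sqrt (8 * t * max (F (a 0)) 1 / L) →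
      ‖y - a 0‖ ≤ Real.sqrt (8 * t * max (F (a 0)) 1 / L) →
      ‖gradient F x - gradient F y‖ ≤ L * ‖x - y‖) :
    ∀ k, 1 ≤ k → k ≤ t →
      F (a k) ≤ F (a (k - 1)) - (1 / (2 * L)) * ‖gradient F (a (k - 1))‖ ^ 2 := by
  set M := max (F (a 0)) 1 with hMdef
  have hM1 : (1:ℝ) ≤ M := le_max_right _ _
  have hM0 : (0:ℝ) < M := lt_of_lt_of_le one_pos hM1
  have hFa0 : F (a 0) ≤ M := le_max_left _ _
  -- abbreviations
  set R1 : ℝ := Real.sqrt (2 * t * M / L) with hR1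
  set R2 : ℝ := Real.sqrt (8 * t * M / L) with hR2
  have hR1nn : 0 ≤ R1 := Real.sqrt_nonneg _
  have hR2eq : R2 = 2 * R1 := by
    rw [hR2, hR1, show (8:ℝ) * t * M / L = 4 * (2 * t * M / L) by ring,
      Real.sqrt_mul (by norm_num : (0:ℝ) ≤ 4), show Real.sqrt 4 = 2 by
        rw [show (4:ℝ) = 2^2 by norm_num, Real.sqrt_sq (by norm_num)]]
  -- norm of gradient controls step length
  have hstepnorm : ∀ x : EuclideanSpace ℝ (Fin K), ‖x - a 0‖ ≤ R1 →
      ‖(1 / L) • gradient F x‖ ≤ R1 := by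
    intro x hx
    rw [norm_smul, Real.norm_eq_abs, abs_of_pos (by positivity : (0:ℝ) < 1 / L)]
    have hg := hgrad x hx
    have h1 : (1 / L) * ‖gradient F x‖ ≤ (1 / L) * Real.sqrt (2 * t * L * M) :=
      mul_le_mul_of_nonneg_left hg (by positivity)
    refine h1.trans ?_
    rw [hR1]
    have he : (1:ℝ)/L * Real.sqrt (2 * t * L * M) =
        Real.sqrt ((1/L)^2 * (2 * t * L * M)) := by
      rw [Real.sqrt_mul (sq_nonneg _), Real.sqrt_sq (by positivity)]
    rw [he]
    apply Real.sqrt_le_sqrt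
    apply le_of_eq
    field_simp
  -- one-step descent
  have key : ∀ k < t, ‖a k - a 0‖ ≤ R1 →
      F (a (k+1)) ≤ F (a k) - (1 / (2 * L)) * ‖gradient F (a k)‖ ^ 2 := by
    intro k hk hball
    set x := a k with hx
    set g := gradient F x with hg
    set d : EuclideanSpace ℝ (Fin K) := -((1 / L) • g) with hd
    have hdn : ‖d‖ ≤ R1 := by rw [hd, norm_neg]; exact hstepnorm x hball
    have hseg : ∀ s : ℝ, s ∈ Set.Icc (0:ℝ) 1 → ‖x + s • d - a 0‖ ≤ R2 := by
      intro s hs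
      have : ‖x + s • d - a 0‖ ≤ ‖x - a 0‖ + ‖s • d‖ := by
        rw [show x + s • d - a 0 = (x - a 0) + s • d by abel]
        exact norm_add_le _ _
      refine this.trans ?_
      rw [hR2eq, norm_smul, Real.norm_eq_abs, abs_of_nonneg hs.1]
      have : s * ‖d‖ ≤ 1 * R1 :=
        mul_le_mul hs.2 hdn (norm_nonneg _) zero_le_one
      linarith
    have hl : ∀ s ∈ Set.Icc (0:ℝ) 1, ∀ s' ∈ Set.Icc (0:ℝ) 1,
        ‖gradient F (x + s • d) - gradient F (x + s' • d)‖ ≤ L * (|s - s'| * ‖d‖) := by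
      intro s hs s' hs'
      have := hlip (x + s • d) (x + s' • d) (hseg s hs) (hseg s' hs')
      refine this.trans ?_
      apply mul_le_mul_of_nonneg_left _ hL.le
      rw [show x + s • d - (x + s' • d) = (s - s') • d by
        rw [sub_smul]; abel]
      rw [norm_smul, Real.norm_eq_abs]
    have hdesc := gd_descent F hFdiff x d L hL hl
    have hstepk := hstep k hk
    have hxd : a (k + 1) = x + d := by rw [hstepk, hd]; abel
    rw [hxd]
    have hinner : (inner ℝ g d : ℝ) = -(1/L) * ‖g‖ ^ 2 := by
      rw [hd, inner_neg_right, real_inner_smul_right, real_inner_self_eq_norm_sq]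
      ring
    have hnd : ‖d‖ ^ 2 = (1/L)^2 * ‖g‖ ^ 2 := by
      rw [hd, norm_neg, norm_smul, mul_pow, Real.norm_eq_abs, sq_abs]
    rw [hinner, hnd] at hdesc
    have hLne : L ≠ 0 := hL.ne'
    refine hdesc.trans (le_of_eq ?_)
    field_simp
    ring
  -- main induction
  have main : ∀ k, k ≤ t →
      (F (a k) + (1/(2*L)) * ∑ j ∈ Finset.range k, ‖gradient F (a j)‖ ^ 2 ≤ F (a 0)) ∧
      ‖a k - a 0‖ ≤ Real.sqrt (2 * k * M / L) := by
    intro k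
    induction k with
    | zero => exact fun _ => ⟨by simp, by simp⟩
    | succ k ih =>
      intro hk1
      have hkt : k < t := hk1
      obtain ⟨hP, hQ⟩ := ih (le_of_lt hkt)
      have hQ' : ‖a k - a 0‖ ≤ R1 := by
        refine hQ.trans (Real.sqrt_le_sqrt ?_)
        have hc : (k:ℝ) ≤ t := Nat.cast_le.mpr (le_of_lt hkt)
        gcongr
      have hdec := key k hkt hQ'
      have hP' : F (a (k+1)) + (1/(2*L)) * ∑ j ∈ Finset.range (k+1), ‖gradient F (a j)‖ ^ 2
          ≤ F (a 0) := by
        rw [Finset.sum_range_succ]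
        have h2L : (0:ℝ) < 1/(2*L) := by positivity
        nlinarith [hdec, hP]
      refine ⟨hP', ?_⟩
      -- sum bound
      set S := ∑ j ∈ Finset.range (k+1), ‖gradient F (a j)‖ ^ 2 with hS
      set T := ∑ j ∈ Finset.range (k+1), ‖gradient F (a j)‖ with hT
      have hSnn : 0 ≤ S := Finset.sum_nonneg fun _ _ => sq_nonneg _
      have hTnn : 0 ≤ T := Finset.sum_nonneg fun _ _ => norm_nonneg _
      have hT2 : T ^ 2 ≤ (k+1 : ℝ) * S := by
        have := sq_sum_le_card_mul_sum_sq (s := Finset.range (k+1))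
          (f := fun j => ‖gradient F (a j)‖)
        simpa using this
      have hS2 : S ≤ 2 * L * M := by
        have h0 : 0 ≤ F (a (k+1)) := hFnonneg _
        have : (1/(2*L)) * S ≤ M := by linarith
        have h2L : (0:ℝ) < 2*L := by positivity
        rw [div_mul_eq_mul_div, one_mul, div_le_iff₀ h2L] at this
        linarith [this]
      -- telescoping
      have htel : ‖a (k+1) - a 0‖ ≤ (1/L) * T := by
        have h1 : dist (a 0) (a (k+1)) ≤
            ∑ i ∈ Finset.range (k+1), dist (a i) (a (i+1)) :=
          dist_le_range_sum_dist a (k+1)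
        rw [dist_comm, dist_eq_norm] at h1
        refine h1.trans ?_
        rw [hT, Finset.mul_sum]
        apply Finset.sum_le_sum
        intro j hj
        have hjt : j < t := lt_of_lt_of_le (Finset.mem_range.mp hj) hk1
        rw [dist_eq_norm, hstep j hjt,
          show a j - (a j - (1 / L) • gradient F (a j)) = (1 / L) • gradient F (a j) by abel,
          norm_smul, Real.norm_eq_abs, abs_of_pos (by positivity : (0:ℝ) < 1/L)]
      refine htel.trans ?_
      rw [Real.le_sqrt (by positivity)]
      swap
      · positivity
      have hcast : ((k+1 : ℕ) : ℝ) = (k : ℝ) + 1 := by push_cast; ring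
      rw [hcast]
      have h1 : ((1/L) * T)^2 = (1/L^2) * T^2 := by ring
      rw [h1]
      have h2 : (1/L^2) * T^2 ≤ (1/L^2) * ((k+1:ℝ) * (2*L*M)) := by
        apply mul_le_mul_of_nonneg_left _ (by positivity)
        refine hT2.trans ?_
        exact mul_le_mul_of_nonneg_left hS2 (by positivity)
      refine h2.trans (le_of_eq ?_)
      field_simp
  -- conclude
  intro k hk1 hkt
  obtain ⟨j, rfl⟩ : ∃ j, k = j + 1 := ⟨k - 1, (Nat.succ_pred_eq_of_pos hk1).symm⟩
  have hjt : j < t := hkt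
  have hQ := (main j (le_of_lt hjt)).2
  have hQ' : ‖a j - a 0‖ ≤ R1 := by
    refine hQ.trans (Real.sqrt_le_sqrt ?_)
    have hc : (j:ℝ) ≤ t := Nat.cast_le.mpr (le_of_lt hjt)
    gcongr
  have := key j hjt hQ'
  simpa using this
end

section
/- Under the assumptions of the gradient descent lemma (F : ℝ^K → ℝ≥0 differentiable, λ = 1/L, a_{k+1} = a_k − λ∇F(a_k), gradient bound and Lipschitz condition on the stated balls around a₀), for all k ∈ {1,…,t} one has ‖a_k − a₀‖ ≤ √( (2k/L) · (F(a₀) − F(a_k)) ). -/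
open Real

lemma gd_quad_upper {K : ℕ} (F : EuclideanSpace ℝ (Fin K) → ℝ) (hF : Differentiable ℝ F)
    (x v : EuclideanSpace ℝ (Fin K)) (L : ℝ)
    (hlip : ∀ s ∈ Set.Icc (0:ℝ) 1,
      ‖gradient F (x + s • v) - gradient F x‖ ≤ L * s * ‖v‖) :
    F (x + v) ≤ F x + inner ℝ (gradient F x) v + L / 2 * ‖v‖ ^ 2 := by
  set g : ℝ → ℝ := fun s =>
    F (x + s • v) - s * inner ℝ (gradient F x) v - L / 2 * s ^ 2 * ‖v‖ ^ 2 with hgdef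
  have hderiv : ∀ s : ℝ, HasDerivAt g
      ((inner ℝ (gradient F (x + s • v)) v : ℝ) - inner ℝ (gradient F x) v
        - L * s * ‖v‖ ^ 2) s := by
    intro s
    have hline : HasDerivAt (fun s : ℝ => x + s • v) v s := by
      simpa using ((hasDerivAt_id s).smul_const v).const_add x
    have h1 : HasDerivAt (fun s : ℝ => F (x + s • v))
        (inner ℝ (gradient F (x + s • v)) v : ℝ) s := by
      have hfd := (hF (x + s • v)).hasGradientAt
      rw [hasGradientAt_iff_hasFDerivAt] at hfd
      have := hfd.comp_hasDerivAt s hline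
      rw [InnerProductSpace.toDual_apply_apply] at this
      exact this
    have h2 : HasDerivAt (fun s : ℝ => s * (inner ℝ (gradient F x) v : ℝ))
        (inner ℝ (gradient F x) v : ℝ) s := by
      simpa using (hasDerivAt_id s).mul_const (inner ℝ (gradient F x) v : ℝ)
    have h3 : HasDerivAt (fun s : ℝ => L / 2 * s ^ 2 * ‖v‖ ^ 2)
        (L * s * ‖v‖ ^ 2) s := by
      have := ((hasDerivAt_pow 2 s).const_mul (L / 2)).mul_const (‖v‖ ^ 2)
      refine this.congr_deriv ?_
      push_cast
      ring
    exact (h1.sub h2).sub h3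
  have hanti : AntitoneOn g (Set.Icc 0 1) := by
    apply antitoneOn_of_deriv_nonpos (convex_Icc 0 1)
    · exact fun s _ => (hderiv s).continuousAt.continuousWithinAt
    · exact fun s _ => (hderiv s).differentiableAt.differentiableWithinAt
    · intro s hs
      rw [interior_Icc] at hs
      rw [(hderiv s).deriv]
      have hs01 : s ∈ Set.Icc (0:ℝ) 1 := ⟨hs.1.le, hs.2.le⟩
      have h1 : (inner ℝ (gradient F (x + s • v)) v : ℝ) - inner ℝ (gradient F x) v
          = inner ℝ (gradient F (x + s • v) - gradient F x) v := (inner_sub_left _ _ _).symm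
      have h2 : (inner ℝ (gradient F (x + s • v) - gradient F x) v : ℝ)
          ≤ ‖gradient F (x + s • v) - gradient F x‖ * ‖v‖ := real_inner_le_norm _ _
      have h3 := hlip s hs01
      have hv : (0:ℝ) ≤ ‖v‖ := norm_nonneg _
      rw [h1]
      nlinarith [h2, h3]
  have h10 : g 1 ≤ g 0 := hanti (Set.left_mem_Icc.mpr zero_le_one)
    (Set.right_mem_Icc.mpr zero_le_one) zero_le_one
  simp only [hgdef, one_smul, zero_smul, add_zero, one_mul, one_pow, mul_zero,
    zero_mul, sub_zero, mul_one, ne_eq, OfNat.ofNat_ne_zero, not_false_eq_true, zero_pow] at h10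
  linarith

set_option maxHeartbeats 1000000 in
/-- Gradient descent lemma (Lemma 2, first conclusion): iterates stay close to the initialization. -/
theorem gradient_descent_iterate_distance
    {K : ℕ} (F : EuclideanSpace ℝ (Fin K) → ℝ)
    (hFnonneg : ∀ x, 0 ≤ F x) (hFdiff : Differentiable ℝ F)
    (t : ℕ) (L : ℝ) (hL : 0 < L)
    (a : ℕ → EuclideanSpace ℝ (Fin K))
    (hstep : ∀ k < t, a (k + 1) = a k - (1 / L) • gradient F (a k))
    (hgrad : ∀ x, ‖x - a 0‖ ≤ Real.sqrt (2 * t * max (F (a 0)) 1 / L) →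
      ‖gradient F x‖ ≤ Real.sqrt (2 * t * L * max (F (a 0)) 1))
    (hlip : ∀ x y, ‖x - a 0‖ ≤ Real.sqrt (8 * t * max (F (a 0)) 1 / L) →
      ‖y - a 0‖ ≤ Real.sqrt (8 * t * max (F (a 0)) 1 / L) →
      ‖gradient F x - gradient F y‖ ≤ L * ‖x - y‖) :
    ∀ k, 1 ≤ k → k ≤ t →
      ‖a k - a 0‖ ≤ Real.sqrt (2 * k / L * (F (a 0) - F (a k))) := by
  set M : ℝ := max (F (a 0)) 1 with hMdef
  have hM1 : (1:ℝ) ≤ M := le_max_right _ _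
  have hM0 : (0:ℝ) < M := lt_of_lt_of_le one_pos hM1
  have hFa0M : F (a 0) ≤ M := le_max_left _ _
  set S : ℕ → ℝ := fun k => ∑ j ∈ Finset.range k, ‖gradient F (a j)‖ ^ 2 with hSdef
  have hSnonneg : ∀ k, 0 ≤ S k := fun k => Finset.sum_nonneg fun j _ => sq_nonneg _
  -- telescoping
  have hsum : ∀ k, k ≤ t →
      a k - a 0 = -((1 / L) • ∑ j ∈ Finset.range k, gradient F (a j)) := by
    intro k
    induction k with
    | zero => intro _; simp
    | succ k ih =>
      intro hk1
      have hkt : k ≤ t := Nat.le_of_succ_le hk1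
      have hklt : k < t := hk1
      rw [hstep k hklt, Finset.sum_range_succ, smul_add, neg_add, sub_right_comm, ih hkt]
      abel
  -- norm-squared bound via Cauchy–Schwarz
  have hnormsq : ∀ k, k ≤ t → ‖a k - a 0‖ ^ 2 ≤ (k : ℝ) / L ^ 2 * S k := by
    intro k hk
    have h1 : ‖a k - a 0‖ ≤ (1 / L) * ∑ j ∈ Finset.range k, ‖gradient F (a j)‖ := by
      rw [hsum k hk, norm_neg, norm_smul, Real.norm_eq_abs,
        abs_of_pos (by positivity : (0:ℝ) < 1 / L)]
      exact mul_le_mul_of_nonneg_left (norm_sum_le _ _) (by positivity)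
    have h2 : (∑ j ∈ Finset.range k, ‖gradient F (a j)‖) ^ 2 ≤ (k : ℝ) * S k := by
      simpa [hSdef] using
        sq_sum_le_card_mul_sum_sq (s := Finset.range k) (f := fun j => ‖gradient F (a j)‖)
    have h3 : ‖a k - a 0‖ ^ 2 ≤ ((1 / L) * ∑ j ∈ Finset.range k, ‖gradient F (a j)‖) ^ 2 :=
      pow_le_pow_left₀ (norm_nonneg _) h1 2
    calc ‖a k - a 0‖ ^ 2
        ≤ (1 / L) ^ 2 * (∑ j ∈ Finset.range k, ‖gradient F (a j)‖) ^ 2 := by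
          rw [mul_pow] at h3; exact h3
      _ ≤ (1 / L) ^ 2 * ((k : ℝ) * S k) := by
          have : (0:ℝ) ≤ (1 / L) ^ 2 := by positivity
          exact mul_le_mul_of_nonneg_left h2 this
      _ = (k : ℝ) / L ^ 2 * S k := by field_simp
  -- descent invariant
  have hQ : ∀ k, k ≤ t → F (a k) + (1 / (2 * L)) * S k ≤ F (a 0) := by
    intro k
    induction k with
    | zero => intro _; simp [hSdef]
    | succ k ih =>
      intro hk1
      have hkt : k ≤ t := Nat.le_of_succ_le hk1
      have hklt : k < t := hk1
      have IH := ih hkt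
      have hhalf : 1 / (2 * L) * S k ≤ F (a 0) - F (a k) := by linarith
      have hSk2LM : S k ≤ 2 * L * (F (a 0) - F (a k)) := by
        calc S k = 2 * L * (1 / (2 * L) * S k) := by field_simp
          _ ≤ 2 * L * (F (a 0) - F (a k)) :=
              mul_le_mul_of_nonneg_left hhalf (by positivity)
      have hSkM : S k ≤ 2 * L * M := by nlinarith [hFnonneg (a k)]
      have hktR : (k : ℝ) ≤ (t : ℝ) := Nat.cast_le.mpr hkt
      have hball : ‖a k - a 0‖ ≤ Real.sqrt (2 * t * M / L) := by
        rw [Real.le_sqrt (norm_nonneg _) (by positivity)]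
        calc ‖a k - a 0‖ ^ 2 ≤ (k : ℝ) / L ^ 2 * S k := hnormsq k hkt
          _ ≤ (t : ℝ) / L ^ 2 * (2 * L * M) := by
              apply mul_le_mul (by gcongr) hSkM (hSnonneg k) (by positivity)
          _ = 2 * t * M / L := by field_simp
      have hgk : ‖gradient F (a k)‖ ≤ Real.sqrt (2 * t * L * M) := hgrad _ hball
      set v : EuclideanSpace ℝ (Fin K) := -((1 / L) • gradient F (a k)) with hvdef
      have hav : a (k + 1) = a k + v := by
        rw [hstep k hklt, hvdef, sub_eq_add_neg]
      have hvnorm : ‖v‖ = (1 / L) * ‖gradient F (a k)‖ := by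
        rw [hvdef, norm_neg, norm_smul, Real.norm_eq_abs,
          abs_of_pos (by positivity : (0:ℝ) < 1 / L)]
      have hsqrtdiv : Real.sqrt (2 * t * M / L) = Real.sqrt (2 * t * L * M) / L := by
        rw [show 2 * (t:ℝ) * M / L = (2 * t * L * M) / L ^ 2 by field_simp,
          Real.sqrt_div (by positivity), Real.sqrt_sq hL.le]
      have hvR : ‖v‖ ≤ Real.sqrt (2 * t * M / L) := by
        rw [hvnorm, hsqrtdiv, show Real.sqrt (2 * t * L * M) / L
          = (1 / L) * Real.sqrt (2 * t * L * M) by ring]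
        exact mul_le_mul_of_nonneg_left hgk (by positivity)
      have hsqrt8 : Real.sqrt (8 * t * M / L) = 2 * Real.sqrt (2 * t * M / L) := by
        rw [show (8:ℝ) * t * M / L = 2 ^ 2 * (2 * t * M / L) by ring,
          Real.sqrt_mul (by positivity), Real.sqrt_sq (by norm_num : (0:ℝ) ≤ 2)]
      have hseg : ∀ s ∈ Set.Icc (0:ℝ) 1,
          ‖gradient F (a k + s • v) - gradient F (a k)‖ ≤ L * s * ‖v‖ := by
        intro s hs
        have hsv : ‖s • v‖ = s * ‖v‖ := by
          rw [norm_smul, Real.norm_eq_abs, abs_of_nonneg hs.1]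
        have hxball : ‖a k + s • v - a 0‖ ≤ Real.sqrt (8 * t * M / L) := by
          rw [hsqrt8]
          calc ‖a k + s • v - a 0‖ = ‖(a k - a 0) + s • v‖ := by
                congr 1; abel
            _ ≤ ‖a k - a 0‖ + ‖s • v‖ := norm_add_le _ _
            _ ≤ Real.sqrt (2 * t * M / L) + Real.sqrt (2 * t * M / L) := by
                apply add_le_add hball
                rw [hsv]
                calc s * ‖v‖ ≤ 1 * ‖v‖ :=
                      mul_le_mul_of_nonneg_right hs.2 (norm_nonneg _)
                  _ = ‖v‖ := one_mul _
                  _ ≤ _ := hvR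
            _ = 2 * Real.sqrt (2 * t * M / L) := by ring
        have hyball : ‖a k - a 0‖ ≤ Real.sqrt (8 * t * M / L) := by
          refine hball.trans (Real.sqrt_le_sqrt ?_)
          have : 2 * (t:ℝ) * M ≤ 8 * t * M := by nlinarith [Nat.cast_nonneg (α := ℝ) t]
          exact (div_le_div_iff_of_pos_right hL).mpr this
        have := hlip (a k + s • v) (a k) hxball hyball
        have hdiff : a k + s • v - a k = s • v := by abel
        rw [hdiff, hsv] at this
        calc ‖gradient F (a k + s • v) - gradient F (a k)‖ ≤ L * (s * ‖v‖) := this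
          _ = L * s * ‖v‖ := by ring
      have hdesc := gd_quad_upper F hFdiff (a k) v L hseg
      have hinner : (inner ℝ (gradient F (a k)) v : ℝ) = -(1 / L) * ‖gradient F (a k)‖ ^ 2 := by
        rw [hvdef, inner_neg_right, real_inner_smul_right, real_inner_self_eq_norm_sq]
        ring
      have hvsq : ‖v‖ ^ 2 = (1 / L) ^ 2 * ‖gradient F (a k)‖ ^ 2 := by
        rw [hvnorm]; ring
      have hdesc2 : F (a (k + 1)) ≤ F (a k) - (1 / (2 * L)) * ‖gradient F (a k)‖ ^ 2 := by
        rw [hav]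
        calc F (a k + v) ≤ F (a k) + inner ℝ (gradient F (a k)) v + L / 2 * ‖v‖ ^ 2 := hdesc
          _ = F (a k) - (1 / (2 * L)) * ‖gradient F (a k)‖ ^ 2 := by
              rw [hinner, hvsq]; field_simp; ring
      have hSsucc : S (k + 1) = S k + ‖gradient F (a k)‖ ^ 2 := by
        simp [hSdef, Finset.sum_range_succ]
      rw [hSsucc]
      have h2L : (0:ℝ) < 1 / (2 * L) := by positivity
      nlinarith [hdesc2, IH]
  -- conclusion
  intro k hk1 hkt
  have hQk := hQ k hkt
  have hhalf : 1 / (2 * L) * S k ≤ F (a 0) - F (a k) := by linarith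
  have hSk2 : S k ≤ 2 * L * (F (a 0) - F (a k)) := by
    calc S k = 2 * L * (1 / (2 * L) * S k) := by field_simp
      _ ≤ 2 * L * (F (a 0) - F (a k)) :=
          mul_le_mul_of_nonneg_left hhalf (by positivity)
  have hfin : ‖a k - a 0‖ ^ 2 ≤ 2 * k / L * (F (a 0) - F (a k)) := by
    calc ‖a k - a 0‖ ^ 2 ≤ (k : ℝ) / L ^ 2 * S k := hnormsq k hkt
      _ ≤ (k : ℝ) / L ^ 2 * (2 * L * (F (a 0) - F (a k))) :=
          mul_le_mul_of_nonneg_left hSk2 (by positivity)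
      _ = 2 * k / L * (F (a 0) - F (a k)) := by field_simp
  exact (Real.le_sqrt (norm_nonneg _) ((sq_nonneg _).trans hfin)).mpr hfin
end

section
/- Let d ∈ ℕ, k ∈ ℕ, N ∈ ℕ, δ > 0 with 2·δ·2^k ≤ 1/2, and let Z₁,…,Z_N be [0,1]^d-valued random vectors. Consider, for each shift s ∈ ℝ^d with components that are multiples of 2δ in [0, 1/2^k], the collection P_s of (2^k+1)^d pairwise disjoint axis-parallel cubes of side length 1/2^k obtained by shifting a fixed partition of [−1/2^k, 1]^d by s, and let U_s = union over A ∈ P_s of the δ-border A_{border,δ} of A. Then there exists a shift s such that Σ_{i=1}^N P_{Z_i}(U_s) ≤ 4 d · 2^k · N · δ. -/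
open MeasureTheory
open scoped ENNReal

/-- The δ-border of the axis-parallel cube with lower corner `lo` and
upper corner `lo + side` (componentwise). -/
def cubeBorder {d : ℕ} (lo : Fin d → ℝ) (side δ : ℝ) : Set (Fin d → ℝ) :=
  {x | (∀ i, lo i - δ ≤ x i ∧ x i ≤ lo i + side + δ) ∧
       ¬ (∀ i, lo i + δ ≤ x i ∧ x i ≤ lo i + side - δ)}

/-- Lower corner of the cube indexed by `j` of the partition of
`[-1/2^k, 1]^d` into cubes of side length `1/2^k`, shifted by `s`. -/
noncomputable def cubeLow {d : ℕ} (k : ℕ) (j : Fin d → Fin (2 ^ k + 1)) (s : Fin d → ℝ) :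
    Fin d → ℝ :=
  fun i => -(1 / 2 ^ k) + (j i : ℝ) / 2 ^ k + s i

private def badSet (d : ℕ) (side δ : ℝ) (i : Fin d) (r : ℕ) : Set (Fin d → ℝ) :=
  {x | ∃ m : ℤ, |x i - ((m : ℝ) * side + 2 * (r : ℝ) * δ)| ≤ δ}

private lemma badSet_meas {d : ℕ} (side δ : ℝ) (i : Fin d) (r : ℕ) :
    MeasurableSet (badSet d side δ i r) := by
  have : badSet d side δ i r = ⋃ m : ℤ,
      (fun x : Fin d → ℝ => x i) ⁻¹' {y : ℝ | |y - ((m : ℝ) * side + 2 * (r : ℝ) * δ)| ≤ δ} := by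
    ext x; simp [badSet, Set.mem_iUnion]
  rw [this]
  exact MeasurableSet.iUnion fun m =>
    (measurable_pi_apply i) (measurableSet_le ((measurable_id.sub_const _).abs) measurable_const)

private lemma pairLemma {side δ : ℝ} (hδ : 0 < δ) (h4 : 4 * δ ≤ side) (K : ℕ)
    (hK2 : 2 * δ * K < side + 2 * δ)
    (y : ℝ) (m m' : ℤ) (r r' : ℕ) (hrr : r < r') (hr'K : r' < K)
    (h : |y - ((m : ℝ) * side + 2 * (r : ℝ) * δ)| ≤ δ)
    (h' : |y - ((m' : ℝ) * side + 2 * (r' : ℝ) * δ)| ≤ δ) :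
    ((m : ℝ) * side + 2 * (r : ℝ) * δ = y - δ ∧
      (m' : ℝ) * side + 2 * (r' : ℝ) * δ = y + δ ∧ r' = r + 1) ∨
    (r = 0 ∧ r' = K - 1) := by
  have hside : 0 < side := by linarith
  rw [abs_le] at h h'
  have hr1 : (r : ℝ) + 1 ≤ (r' : ℝ) := by exact_mod_cast hrr
  have hrK : (r' : ℝ) ≤ (K : ℝ) - 1 := by
    have : (r' : ℝ) + 1 ≤ (K : ℝ) := by exact_mod_cast hr'K
    linarith
  have hrnn : (0 : ℝ) ≤ (r : ℝ) := Nat.cast_nonneg r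
  rcases (by omega : m + 1 ≤ m' ∨ m' = m ∨ m' = m - 1 ∨ m' + 2 ≤ m) with hm | hm | hm | hm
  · exfalso
    have hmc : (m : ℝ) + 1 ≤ (m' : ℝ) := by exact_mod_cast hm
    have e1 : (1 : ℝ) * side ≤ ((m' : ℝ) - m) * side :=
      mul_le_mul_of_nonneg_right (by linarith) hside.le
    have e2 : (1 : ℝ) * δ ≤ ((r' : ℝ) - r) * δ :=
      mul_le_mul_of_nonneg_right (by linarith) hδ.le
    nlinarith [h.2, h'.1]
  · -- m' = m
    subst hm
    have hD : ((r' : ℝ) - r) * δ ≤ 1 * δ := by nlinarith [h.2, h'.1]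
    have hD2 : (r' : ℝ) ≤ (r : ℝ) + 1 := by nlinarith
    have hre : (r' : ℝ) = (r : ℝ) + 1 := le_antisymm hD2 hr1
    have hrn : r' = r + 1 := by exact_mod_cast hre
    left
    refine ⟨by nlinarith [h.2, h'.1], by nlinarith [h.2, h'.1], hrn⟩
  · -- m' = m - 1
    subst hm
    have hmc : ((m - 1 : ℤ) : ℝ) = (m : ℝ) - 1 := by push_cast; ring
    rw [hmc] at h'
    have e1 : ((K : ℝ) - 2) * δ < ((r' : ℝ) - r) * δ := by nlinarith [h.1, h'.2]
    have e2 : (K : ℝ) - 2 < (r' : ℝ) - r := lt_of_mul_lt_mul_right e1 hδ.le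
    have e3 : (K : ℝ) + r < (r' : ℝ) + 2 := by linarith
    have e4 : K + r < r' + 2 := by exact_mod_cast e3
    right
    omega
  · exfalso
    have hmc : (m' : ℝ) ≤ (m : ℝ) - 2 := by exact_mod_cast (by omega : m' ≤ m - 2)
    have e1 : (m' : ℝ) * side ≤ ((m : ℝ) - 2) * side :=
      mul_le_mul_of_nonneg_right hmc hside.le
    have e2 : ((r' : ℝ) - r) * δ ≤ ((K : ℝ) - 1) * δ :=
      mul_le_mul_of_nonneg_right (by linarith) hδ.le
    nlinarith [h.1, h'.2]

private lemma tripleLemma {side δ : ℝ} (hδ : 0 < δ) (h4 : 4 * δ ≤ side) (K : ℕ)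
    (hK2 : 2 * δ * K < side + 2 * δ)
    (y : ℝ) (r1 r2 r3 : ℕ) (h12 : r1 < r2) (h23 : r2 < r3) (h3K : r3 < K)
    (H1 : ∃ m : ℤ, |y - ((m : ℝ) * side + 2 * (r1 : ℝ) * δ)| ≤ δ)
    (H2 : ∃ m : ℤ, |y - ((m : ℝ) * side + 2 * (r2 : ℝ) * δ)| ≤ δ)
    (H3 : ∃ m : ℤ, |y - ((m : ℝ) * side + 2 * (r3 : ℝ) * δ)| ≤ δ) : False := by
  obtain ⟨m1, h1⟩ := H1
  obtain ⟨m2, h2⟩ := H2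
  obtain ⟨m3, h3⟩ := H3
  rcases pairLemma hδ h4 K hK2 y m1 m3 r1 r3 (h12.trans h23) h3K h1 h3 with
    ⟨-, -, h13⟩ | ⟨hr1, hr3⟩
  · omega
  · rcases pairLemma hδ h4 K hK2 y m1 m2 r1 r2 h12 (h23.trans h3K) h1 h2 with
      ⟨-, hc2, -⟩ | ⟨-, hr2⟩
    · rcases pairLemma hδ h4 K hK2 y m2 m3 r2 r3 h23 h3K h2 h3 with
        ⟨hc2', -, -⟩ | ⟨hr2', -⟩
      · linarith
      · omega
    · omega

open scoped Classical in
private lemma cardLemma {side δ : ℝ} (hδ : 0 < δ) (h4 : 4 * δ ≤ side) (K : ℕ)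
    (hK2 : 2 * δ * K < side + 2 * δ) (y : ℝ) :
    ((Finset.range K).filter
      (fun r : ℕ => ∃ m : ℤ, |y - ((m : ℝ) * side + 2 * (r : ℝ) * δ)| ≤ δ)).card ≤ 2 := by
  by_contra hlt
  push_neg at hlt
  obtain ⟨a, ha, b, hb, c, hc, hab, hac, hbc⟩ := Finset.two_lt_card.mp hlt
  simp only [Finset.mem_filter, Finset.mem_range] at ha hb hc
  have key : ∀ p q t : ℕ, p < q → q < t → t < K →
      (∃ m : ℤ, |y - ((m : ℝ) * side + 2 * (p : ℝ) * δ)| ≤ δ) →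
      (∃ m : ℤ, |y - ((m : ℝ) * side + 2 * (q : ℝ) * δ)| ≤ δ) →
      (∃ m : ℤ, |y - ((m : ℝ) * side + 2 * (t : ℝ) * δ)| ≤ δ) → False :=
    fun p q t h1 h2 h3 H1 H2 H3 => tripleLemma hδ h4 K hK2 y p q t h1 h2 h3 H1 H2 H3
  rcases Nat.lt_trichotomy a b with h1 | h1 | h1
  · rcases Nat.lt_trichotomy b c with h2 | h2 | h2
    · exact key a b c h1 h2 hc.1 ha.2 hb.2 hc.2
    · omega
    · rcases Nat.lt_trichotomy a c with h3 | h3 | h3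
      · exact key a c b h3 h2 hb.1 ha.2 hc.2 hb.2
      · omega
      · exact key c a b h3 h1 hb.1 hc.2 ha.2 hb.2
  · omega
  · rcases Nat.lt_trichotomy a c with h2 | h2 | h2
    · exact key b a c h1 h2 hc.1 hb.2 ha.2 hc.2
    · omega
    · rcases Nat.lt_trichotomy b c with h3 | h3 | h3
      · exact key b c a h3 h2 ha.1 hb.2 hc.2 ha.2
      · omega
      · exact key c b a h3 h1 ha.1 hc.2 hb.2 ha.2

open scoped Classical in
private lemma badSum {d : ℕ} {side δ : ℝ} (hδ : 0 < δ) (h4 : 4 * δ ≤ side) (K : ℕ)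
    (hK2 : 2 * δ * K < side + 2 * δ)
    (ν : Measure (Fin d → ℝ)) [IsProbabilityMeasure ν] (i : Fin d) :
    ∑ r ∈ Finset.range K, ν (badSet d side δ i r) ≤ 2 := by
  have heq : ∀ r ∈ Finset.range K,
      ν (badSet d side δ i r) = ∫⁻ x, (badSet d side δ i r).indicator 1 x ∂ν :=
    fun r _ => (lintegral_indicator_one (badSet_meas side δ i r)).symm
  rw [Finset.sum_congr rfl heq,
    ← lintegral_finset_sum _ (fun r _ => (measurable_one.indicator (badSet_meas side δ i r)))]
  calc ∫⁻ x, ∑ r ∈ Finset.range K, (badSet d side δ i r).indicator 1 x ∂ν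
      ≤ ∫⁻ _, 2 ∂ν := by
        refine lintegral_mono fun x => ?_
        have hcast : ∑ r ∈ Finset.range K, (badSet d side δ i r).indicator
            (1 : (Fin d → ℝ) → ℝ≥0∞) x
            = (((Finset.range K).filter
              (fun r : ℕ => ∃ m : ℤ, |x i - ((m : ℝ) * side + 2 * (r : ℝ) * δ)| ≤ δ)).card
                : ℝ≥0∞) := by
          rw [← Finset.sum_boole]
          refine Finset.sum_congr rfl fun r _ => ?_
          simp [Set.indicator_apply, badSet, Set.mem_setOf_eq]
        rw [hcast]
        exact ((Nat.cast_le (α := ℝ≥0∞)).mpr (cardLemma hδ h4 K hK2 (x i))).trans (by norm_num)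
    _ = 2 := by rw [lintegral_const, measure_univ, mul_one]

/-- There exists a shift (with components that are multiples of 2δ in
[0, 1/2^k]) such that the total measure of the union of the δ-borders of the
shifted cubes is at most 4·d·2^k·N·δ (used in the proof of Lemma 7). -/
theorem exists_shift_small_border_measure
    (d k N : ℕ) (hd : 0 < d) (δ : ℝ) (hδ : 0 < δ)
    (hsmall : 2 * δ * 2 ^ k ≤ 1 / 2)
    (μ : Fin N → Measure (Fin d → ℝ)) [∀ i, IsProbabilityMeasure (μ i)] :
    ∃ s : Fin d → ℝ,
      (∀ i, (∃ m : ℕ, s i = m * (2 * δ)) ∧ 0 ≤ s i ∧ s i ≤ 1 / 2 ^ k) ∧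
      (∑ i, (μ i (⋃ j : Fin d → Fin (2 ^ k + 1),
          cubeBorder (cubeLow k j s) (1 / 2 ^ k) δ)).toReal)
        ≤ 4 * d * 2 ^ k * N * δ := by
  classical
  have h2k : (0 : ℝ) < 2 ^ k := by positivity
  set side : ℝ := 1 / 2 ^ k with hside_def
  have hside : 0 < side := by positivity
  have h4 : 4 * δ ≤ side := by
    rw [hside_def, le_div_iff₀ h2k]; linarith
  have hδ2 : (0 : ℝ) < 2 * δ := by linarith
  set K : ℕ := ⌈side / (2 * δ)⌉₊ with hK_def
  have hK0 : 0 < K := Nat.ceil_pos.mpr (by positivity)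
  have hK1 : side ≤ 2 * δ * K := by
    have h := Nat.le_ceil (side / (2 * δ))
    rw [div_le_iff₀ hδ2] at h
    linarith
  have hK2 : 2 * δ * K < side + 2 * δ := by
    have h := Nat.ceil_lt_add_one (le_of_lt (by positivity : (0:ℝ) < side / (2 * δ)))
    have h' : (K : ℝ) * (2 * δ) < (side / (2 * δ) + 1) * (2 * δ) :=
      mul_lt_mul_of_pos_right h hδ2
    rw [add_mul, div_mul_cancel₀ _ hδ2.ne'] at h'
    linarith
  -- the subset property
  have hsub : ∀ r : ℕ,
      (⋃ j : Fin d → Fin (2 ^ k + 1),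
        cubeBorder (cubeLow k j (fun _ => (r : ℝ) * (2 * δ))) side δ)
        ⊆ ⋃ i, badSet d side δ i r := by
    intro r x hx
    simp only [Set.mem_iUnion] at hx ⊢
    obtain ⟨j, hbox, hnot⟩ := hx
    push_neg at hnot
    obtain ⟨i, hi⟩ := hnot
    have hlo : cubeLow k j (fun _ => (r : ℝ) * (2 * δ)) i
        = ((j i : ℝ) - 1) * side + 2 * (r : ℝ) * δ := by
      show -(1 / 2 ^ k) + (j i : ℝ) / 2 ^ k + (r : ℝ) * (2 * δ)
          = ((j i : ℝ) - 1) * side + 2 * (r : ℝ) * δ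
      rw [hside_def]; ring
    have hb := hbox i
    rw [hlo] at hb hi
    refine ⟨i, ?_⟩
    by_cases hc : x i < ((j i : ℝ) - 1) * side + 2 * (r : ℝ) * δ + δ
    · refine ⟨((j i : ℕ) : ℤ) - 1, ?_⟩
      rw [abs_le]
      push_cast
      constructor <;> [linarith [hb.1]; linarith [hb.1]]
    · push_neg at hc
      have hgt := hi (by linarith)
      refine ⟨((j i : ℕ) : ℤ), ?_⟩
      rw [abs_le]
      push_cast
      constructor <;> [linarith [hb.2]; linarith [hb.2]]
  -- real-valued per-coordinate sums
  have hBadreal : ∀ n : Fin N, ∀ i : Fin d,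
      ∑ r ∈ Finset.range K, (μ n (badSet d side δ i r)).toReal ≤ 2 := by
    intro n i
    rw [← ENNReal.toReal_sum (fun r _ => measure_ne_top _ _)]
    calc (∑ r ∈ Finset.range K, μ n (badSet d side δ i r)).toReal
        ≤ (2 : ℝ≥0∞).toReal := ENNReal.toReal_mono (by norm_num) (badSum hδ h4 K hK2 (μ n) i)
      _ = 2 := by norm_num
  have hFle : ∀ r : ℕ,
      (∑ n, (μ n (⋃ j : Fin d → Fin (2 ^ k + 1),
          cubeBorder (cubeLow k j (fun _ => (r : ℝ) * (2 * δ))) side δ)).toReal)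
        ≤ ∑ n, ∑ i, (μ n (badSet d side δ i r)).toReal := by
    intro r
    refine Finset.sum_le_sum fun n _ => ?_
    have hle1 : μ n (⋃ j : Fin d → Fin (2 ^ k + 1),
        cubeBorder (cubeLow k j (fun _ => (r : ℝ) * (2 * δ))) side δ)
          ≤ ∑ i, μ n (badSet d side δ i r) :=
      (measure_mono (hsub r)).trans (measure_iUnion_fintype_le _ _)
    have h2 := ENNReal.toReal_mono
      (ENNReal.sum_ne_top.mpr (fun i _ => measure_ne_top _ _)) hle1
    rwa [ENNReal.toReal_sum (fun i _ => measure_ne_top _ _)] at h2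
  have hsumF : ∑ r ∈ Finset.range K, (∑ n, (μ n (⋃ j : Fin d → Fin (2 ^ k + 1),
        cubeBorder (cubeLow k j (fun _ => (r : ℝ) * (2 * δ))) side δ)).toReal)
      ≤ 2 * N * d := by
    calc ∑ r ∈ Finset.range K, (∑ n, (μ n (⋃ j : Fin d → Fin (2 ^ k + 1),
          cubeBorder (cubeLow k j (fun _ => (r : ℝ) * (2 * δ))) side δ)).toReal)
        ≤ ∑ r ∈ Finset.range K, ∑ n, ∑ i, (μ n (badSet d side δ i r)).toReal :=
          Finset.sum_le_sum fun r _ => hFle r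
      _ = ∑ n, ∑ r ∈ Finset.range K, ∑ i, (μ n (badSet d side δ i r)).toReal :=
          Finset.sum_comm
      _ = ∑ n, ∑ i, ∑ r ∈ Finset.range K, (μ n (badSet d side δ i r)).toReal :=
          Finset.sum_congr rfl fun n _ => Finset.sum_comm
      _ ≤ ∑ _n : Fin N, ∑ _i : Fin d, (2 : ℝ) :=
          Finset.sum_le_sum fun n _ => Finset.sum_le_sum fun i _ => hBadreal n i
      _ = 2 * N * d := by
          simp only [Finset.sum_const, Finset.card_univ, Fintype.card_fin, nsmul_eq_mul]
          ring
  have hKbound : (2 : ℝ) * N * d ≤ ∑ _r ∈ Finset.range K, (4 * d * 2 ^ k * N * δ) := by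
    rw [Finset.sum_const, Finset.card_range, nsmul_eq_mul]
    have h1 : (1 : ℝ) ≤ 2 * δ * K * 2 ^ k := by
      rw [hside_def] at hK1
      have := (div_le_iff₀ h2k).mp hK1
      linarith
    nlinarith [mul_le_mul_of_nonneg_left h1
      (by positivity : (0 : ℝ) ≤ 2 * (N : ℝ) * (d : ℝ))]
  obtain ⟨r, hrK, hrle⟩ := Finset.exists_le_of_sum_le
    (Finset.nonempty_range_iff.mpr hK0.ne') (hsumF.trans hKbound)
  rw [Finset.mem_range] at hrK
  refine ⟨fun _ => (r : ℝ) * (2 * δ), fun i => ⟨⟨r, rfl⟩, by positivity, ?_⟩, hrle⟩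
  have hr1 : (r : ℝ) + 1 ≤ (K : ℝ) := by exact_mod_cast hrK
  have := mul_le_mul_of_nonneg_right (by linarith : (r : ℝ) ≤ (K : ℝ) - 1) hδ2.le
  show (r : ℝ) * (2 * δ) ≤ side
  nlinarith
end
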